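/- arXiv:1908.03647 — 5 statements merged into one kernel-verified Lean document; each statement's English description precedes it below -/
import Mathlib

section
/- If the scalar matrix sI lies in the convex hull of a family F of n-by-n complex matrices, then the set of all eigenvalues of matrices in the convex hull of F is star-shaped from the point s; that is, whenever λ is an eigenvalue of some matrix in Co(F) and α ∈ [0,1], the complex number αλ + (1−α)s is also an eigenvalue of some matrix in Co(F). -/
/-- If the scalar matrix `s • 1` lies in the convex hull of a family `F` of
`n × n` complex matrices, then the set of eigenvalues of matrices in the
convex hull is star-shaped from `s`. -/
theorem stmt_3 {n : ℕ} (F : Set (Matrix (Fin n) (Fin n) ℂ)) (s : ℂ)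
    (hs : s • (1 : Matrix (Fin n) (Fin n) ℂ) ∈ convexHull ℝ F)
    (lam : ℂ) (A : Matrix (Fin n) (Fin n) ℂ) (hA : A ∈ convexHull ℝ F)
    (v : Fin n → ℂ) (hv : v ≠ 0) (hev : A.mulVec v = lam • v)
    (α : ℝ) (hα : α ∈ Set.Icc (0 : ℝ) 1) :
    ∃ B ∈ convexHull ℝ F, ∃ w : Fin n → ℂ, w ≠ 0 ∧
      B.mulVec w = ((α : ℂ) * lam + (1 - (α : ℂ)) * s) • w := by
  obtain ⟨hα0, hα1⟩ := hα
  refine ⟨α • A + (1 - α) • (s • (1 : Matrix (Fin n) (Fin n) ℂ)), ?_, v, hv, ?_⟩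
  · exact (convex_convexHull ℝ F) hA hs hα0 (by linarith) (by ring)
  · have h1 : (s • (1 : Matrix (Fin n) (Fin n) ℂ)).mulVec v = s • v := by
      rw [Matrix.smul_mulVec, Matrix.one_mulVec]
    rw [Matrix.add_mulVec, Matrix.smul_mulVec, Matrix.smul_mulVec, hev, h1]
    ext i
    simp [smul_smul, Complex.ofReal_sub]
    ring
end

section
/- For n ≥ 2, the set DS_n of complex numbers occurring as an eigenvalue of some n-by-n doubly stochastic matrix is star-shaped from every point s ∈ [0,1]. -/
def DoublyStochastic' {n : ℕ} (A : Matrix (Fin n) (Fin n) ℝ) : Prop :=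
  (∀ i j, 0 ≤ A i j) ∧ (∀ i, ∑ j, A i j = 1) ∧ (∀ j, ∑ i, A i j = 1)

/-- `DS n`: the set of complex numbers that occur as an eigenvalue of some
`n × n` doubly stochastic matrix. -/
def DS (n : ℕ) : Set ℂ :=
  {lam | ∃ A : Matrix (Fin n) (Fin n) ℝ, DoublyStochastic' A ∧
    ∃ v : Fin n → ℂ, v ≠ 0 ∧ (A.map Complex.ofReal).mulVec v = lam • v}

lemma real_mem_DS {n : ℕ} (hn : 2 ≤ n) (t : ℝ) (ht : t ∈ Set.Icc (0:ℝ) 1) :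
    (t : ℂ) ∈ DS n := by
  obtain ⟨ht0, ht1⟩ := ht
  have hn0 : (0:ℝ) < (n:ℝ) := by positivity
  have hn0' : (n:ℝ) ≠ 0 := ne_of_gt hn0
  set i0 : Fin n := ⟨0, by omega⟩
  set i1 : Fin n := ⟨1, by omega⟩
  have hne : i0 ≠ i1 := by simp [i0, i1, Fin.ext_iff]
  have hdiv : (0:ℝ) ≤ (1-t)/n := div_nonneg (by linarith) hn0.le
  refine ⟨Matrix.of fun i j => t * (if i = j then 1 else 0) + (1-t)/n, ⟨?_, ?_, ?_⟩,
    (fun j => (if j = i0 then (1:ℂ) else 0) - (if j = i1 then 1 else 0)), ?_, ?_⟩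
  · intro i j
    by_cases h : i = j <;> simp [h] <;> linarith
  · intro i
    simp only [Matrix.of_apply]
    rw [Finset.sum_add_distrib, Finset.sum_const, ← Finset.mul_sum, Finset.sum_ite_eq]
    simp
    field_simp
    ring
  · intro j
    simp only [Matrix.of_apply]
    rw [Finset.sum_add_distrib, Finset.sum_const, ← Finset.mul_sum, Finset.sum_ite_eq']
    simp
    field_simp
    ring
  · intro h
    have := congrFun h i0
    simp [hne] at this
  · funext i
    have hsum : ∑ j, ((if j = i0 then (1:ℂ) else 0) - (if j = i1 then 1 else 0)) = 0 := by
      rw [Finset.sum_sub_distrib]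
      simp
    simp only [Matrix.mulVec, dotProduct, Matrix.map_apply, Matrix.of_apply,
      Pi.smul_apply, smul_eq_mul]
    push_cast
    simp only [apply_ite Complex.ofReal, Complex.ofReal_one, Complex.ofReal_zero]
    have key : ∀ j : Fin n, ((t:ℂ) * (if i = j then 1 else 0) + (1-t)/n) *
        ((if j = i0 then (1:ℂ) else 0) - (if j = i1 then 1 else 0))
        = (t:ℂ) * ((if i = j then 1 else 0) * ((if j = i0 then (1:ℂ) else 0) - (if j = i1 then 1 else 0)))
          + ((1-(t:ℂ))/n) * ((if j = i0 then (1:ℂ) else 0) - (if j = i1 then 1 else 0)) := by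
      intro j; ring
    rw [Finset.sum_congr rfl (fun j _ => key j), Finset.sum_add_distrib,
      ← Finset.mul_sum, ← Finset.mul_sum, hsum, mul_zero, add_zero]
    congr 1
    rw [Finset.sum_congr rfl (fun j _ => by rw [ite_mul, one_mul, zero_mul]),
      Finset.sum_ite_eq]
    simp

/-- For `n ≥ 2`, `DS n` is star-shaped from every point `s ∈ [0,1]`. -/
theorem stmt_4 {n : ℕ} (hn : 2 ≤ n) (s : ℝ) (hs : s ∈ Set.Icc (0 : ℝ) 1)
    (lam : ℂ) (hlam : lam ∈ DS n) (α : ℝ) (hα : α ∈ Set.Icc (0 : ℝ) 1) :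
    (α : ℂ) * lam + (1 - (α : ℂ)) * (s : ℂ) ∈ DS n := by
  obtain ⟨hs0, hs1⟩ := hs
  obtain ⟨ha0, ha1⟩ := hα
  have hn0 : (0:ℝ) < (n:ℝ) := by positivity
  have hn0' : (n:ℝ) ≠ 0 := ne_of_gt hn0
  obtain ⟨A, ⟨hApos, hArow, hAcol⟩, v, hv, heig⟩ := hlam
  by_cases hl1 : lam = 1
  · subst hl1
    have : ((α:ℂ) * 1 + (1 - α) * s) = ((α + (1 - α) * s : ℝ) : ℂ) := by push_cast; ring
    rw [this]
    exact real_mem_DS hn _ ⟨by nlinarith, by nlinarith⟩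
  · have heig' : ∀ i, ∑ j, (A i j : ℂ) * v j = lam * v i := by
      intro i
      have := congrFun heig i
      simpa [Matrix.mulVec, dotProduct] using this
    have hsum : ∑ j, v j = 0 := by
      have h1 : ∑ i, ∑ j, (A i j : ℂ) * v j = lam * ∑ i, v i := by
        rw [Finset.mul_sum]
        exact Finset.sum_congr rfl fun i _ => heig' i
      have h2 : ∑ i, ∑ j, (A i j : ℂ) * v j = ∑ j, v j := by
        rw [Finset.sum_comm]
        refine Finset.sum_congr rfl fun j _ => ?_
        rw [← Finset.sum_mul]
        have : ∑ i, (A i j : ℂ) = 1 := by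
          rw [← Complex.ofReal_sum, hAcol j, Complex.ofReal_one]
        rw [this, one_mul]
      have h3 : (lam - 1) * ∑ i, v i = 0 := by
        rw [sub_mul, one_mul, ← h1, h2, sub_self]
      rcases mul_eq_zero.mp h3 with h | h
      · exact absurd (sub_eq_zero.mp h) hl1
      · exact h
    set d : ℝ := (1-α)*(1-s)/n with hd
    have hd0 : 0 ≤ d := by
      rw [hd]; apply div_nonneg _ hn0.le
      exact mul_nonneg (by linarith) (by linarith)
    refine ⟨Matrix.of fun i j => α * A i j + (1-α)*s * (if i = j then 1 else 0) + d,
      ⟨?_, ?_, ?_⟩, v, hv, ?_⟩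
    · intro i j
      have h2 : 0 ≤ (1-α)*s := mul_nonneg (by linarith) hs0
      by_cases h : i = j <;>
        simp only [Matrix.of_apply, h, if_true, if_false, mul_one, mul_zero, add_zero] <;>
        linarith [mul_nonneg ha0 (hApos j j), mul_nonneg ha0 (hApos i j)]
    · intro i
      simp only [Matrix.of_apply]
      rw [Finset.sum_add_distrib, Finset.sum_add_distrib, ← Finset.mul_sum,
        ← Finset.mul_sum, hArow i, Finset.sum_ite_eq, Finset.sum_const]
      simp [hd]
      field_simp
      ring
    · intro j
      simp only [Matrix.of_apply]
      rw [Finset.sum_add_distrib, Finset.sum_add_distrib, ← Finset.mul_sum,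
        ← Finset.mul_sum, hAcol j, Finset.sum_ite_eq', Finset.sum_const]
      simp [hd]
      field_simp
      ring
    · funext i
      simp only [Matrix.mulVec, dotProduct, Matrix.map_apply, Matrix.of_apply,
        Pi.smul_apply, smul_eq_mul]
      push_cast
      simp only [apply_ite Complex.ofReal, Complex.ofReal_one, Complex.ofReal_zero]
      have expand : ∀ j : Fin n,
          ((α:ℂ) * A i j + (1-α)*s * (if i = j then 1 else 0) + (d:ℝ)) * v j
          = (α:ℂ) * ((A i j : ℂ) * v j)
            + ((1-(α:ℂ))*s) * ((if i = j then 1 else 0) * v j) + ((d:ℝ):ℂ) * v j := by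
        intro j; ring
      rw [Finset.sum_congr rfl (fun j _ => expand j), Finset.sum_add_distrib,
        Finset.sum_add_distrib, ← Finset.mul_sum, ← Finset.mul_sum, ← Finset.mul_sum,
        hsum, mul_zero, add_zero, heig']
      have : ∑ j, (if i = j then (1:ℂ) else 0) * v j = v i := by
        rw [Finset.sum_congr rfl (fun j _ => by rw [ite_mul, one_mul, zero_mul]),
          Finset.sum_ite_eq]
        simp
      rw [this]
      ring
end

section
/- For every k with 1 ≤ k ≤ n, the convex hull Π_k of the k-th roots of unity is contained in DS_n; that is, every complex number of the form α₀ + α₁ξ + ⋯ + α_{k−1}ξ^{k−1}, where ξ = e^{2πi/k}, αⱼ ≥ 0 and ∑αⱼ = 1, is an eigenvalue of some n-by-n doubly stochastic matrix. -/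
/-- block matrix: cyclic convolution on first k coordinates, identity elsewhere -/
def auxA {n k : ℕ} [NeZero k] (α : Fin k → ℝ) : Matrix (Fin n) (Fin n) ℝ :=
  fun i j =>
    if hi : (i : ℕ) < k then
      (if hj : (j : ℕ) < k then α (⟨j, hj⟩ - ⟨i, hi⟩) else 0)
    else (if i = j then 1 else 0)

def auxV (n k : ℕ) (ξ : ℂ) : Fin n → ℂ := fun i => if (i : ℕ) < k then ξ ^ (i : ℕ) else 0

lemma sum_castLE {M : Type*} [AddCommMonoid M] {n k : ℕ} (hkn : k ≤ n) (f : Fin n → M)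
    (hf : ∀ j : Fin n, k ≤ (j : ℕ) → f j = 0) :
    ∑ j : Fin n, f j = ∑ j : Fin k, f (Fin.castLE hkn j) := by
  have h1 : ∑ j ∈ Finset.univ.map (Fin.castLEEmb hkn), f j
      = ∑ j : Fin k, f (Fin.castLE hkn j) := Finset.sum_map _ _ _
  rw [← h1]
  refine (Finset.sum_subset (Finset.subset_univ _) ?_).symm
  intro x _ hx
  refine hf x ?_
  by_contra h
  push_neg at h
  exact hx (Finset.mem_map.mpr ⟨⟨(x : ℕ), h⟩, Finset.mem_univ _, by ext; simp⟩)

/-- For `1 ≤ k ≤ n`, every convex combination of the `k`-th roots of unity is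
an eigenvalue of some `n × n` doubly stochastic matrix, i.e. `Π_k ⊆ DS_n`. -/
theorem stmt_8 {n k : ℕ} (hk : 1 ≤ k) (hkn : k ≤ n)
    (α : Fin k → ℝ) (hα : ∀ j, 0 ≤ α j) (hsum : ∑ j, α j = 1) :
    ∃ A : Matrix (Fin n) (Fin n) ℝ, DoublyStochastic' A ∧
      ∃ v : Fin n → ℂ, v ≠ 0 ∧
        (A.map Complex.ofReal).mulVec v =
          (∑ j : Fin k, (α j : ℂ) *
            Complex.exp (2 * Real.pi * Complex.I / k) ^ (j : ℕ)) • v := by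
  haveI : NeZero k := ⟨by omega⟩
  set ξ : ℂ := Complex.exp (2 * Real.pi * Complex.I / k) with hξdef
  have hkc : (k : ℂ) ≠ 0 := Nat.cast_ne_zero.mpr (by omega)
  have hξk : ξ ^ k = 1 := by
    rw [hξdef, ← Complex.exp_nat_mul]
    have : (k : ℂ) * (2 * Real.pi * Complex.I / k) = 2 * Real.pi * Complex.I := by
      field_simp
    rw [this, Complex.exp_two_pi_mul_I]
  have hmod : ∀ m : ℕ, ξ ^ (m % k) = ξ ^ m := by
    intro m
    conv_rhs => rw [← Nat.mod_add_div m k]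
    rw [pow_add, pow_mul, hξk, one_pow, mul_one]
  have hadd : ∀ a b : Fin k, ξ ^ ((a + b : Fin k) : ℕ) = ξ ^ (a : ℕ) * ξ ^ (b : ℕ) := by
    intro a b
    rw [Fin.val_add, hmod, pow_add]
  refine ⟨auxA α, ⟨?_, ?_, ?_⟩, auxV n k ξ, ?_, ?_⟩
  · -- nonneg
    intro i j
    unfold auxA
    split_ifs
    · exact hα _
    · exact le_refl 0
    · exact zero_le_one
    · exact le_refl 0
  · -- row sums
    intro i
    by_cases hi : (i : ℕ) < k
    · rw [sum_castLE hkn (auxA α i) (fun j hj => by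
        simp only [auxA, dif_pos hi, dif_neg (Nat.not_lt.mpr hj)])]
      have : ∀ j : Fin k, auxA α i (Fin.castLE hkn j) = α (j - ⟨(i : ℕ), hi⟩) := by
        intro j
        simp only [auxA, Fin.coe_castLE, dif_pos hi, dif_pos j.isLt]
      rw [Finset.sum_congr rfl (fun j _ => this j)]
      rw [Fintype.sum_equiv (Equiv.subRight (⟨(i : ℕ), hi⟩ : Fin k))
        (fun j => α (j - ⟨(i : ℕ), hi⟩)) α (fun j => rfl)]
      exact hsum
    · simp only [auxA, dif_neg hi]
      simp
  · -- col sums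
    intro j
    by_cases hj : (j : ℕ) < k
    · rw [sum_castLE hkn (fun i => auxA α i j) (fun i hi => by
        simp only [auxA, dif_neg (Nat.not_lt.mpr hi)]
        have : i ≠ j := by
          intro h; rw [h] at hi; omega
        simp [this])]
      have : ∀ i : Fin k, auxA α (Fin.castLE hkn i) j = α (⟨(j : ℕ), hj⟩ - i) := by
        intro i
        simp only [auxA, Fin.coe_castLE, dif_pos i.isLt, dif_pos hj]
      rw [Finset.sum_congr rfl (fun i _ => this i)]
      rw [Fintype.sum_equiv (Equiv.subLeft (⟨(j : ℕ), hj⟩ : Fin k))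
        (fun i => α (⟨(j : ℕ), hj⟩ - i)) α (fun i => rfl)]
      exact hsum
    · have : ∀ i : Fin n, auxA α i j = if i = j then 1 else 0 := by
        intro i
        by_cases hi : (i : ℕ) < k
        · have hne : i ≠ j := by intro h; rw [h] at hi; omega
          simp only [auxA, dif_pos hi, dif_neg hj, if_neg hne]
        · simp only [auxA, dif_neg hi]
      rw [Finset.sum_congr rfl (fun i _ => this i)]
      simp
  · -- v ≠ 0
    intro h
    have h0 := congrFun h ⟨0, by omega⟩
    simp only [auxV, Pi.zero_apply] at h0
    rw [if_pos (by simpa using Nat.pos_of_ne_zero (by omega))] at h0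
    simp at h0
  · -- eigenvector equation
    funext i
    rw [Matrix.mulVec, dotProduct]
    simp only [Matrix.map_apply, Pi.smul_apply, smul_eq_mul]
    by_cases hi : (i : ℕ) < k
    · rw [sum_castLE hkn (fun j => (Complex.ofReal (auxA α i j)) * auxV n k ξ j)
        (fun j hj => by simp [auxV, Nat.not_lt.mpr hj])]
      have hterm : ∀ j : Fin k,
          (Complex.ofReal (auxA α i (Fin.castLE hkn j))) * auxV n k ξ (Fin.castLE hkn j)
          = (α (j - ⟨(i : ℕ), hi⟩) : ℂ) * ξ ^ (j : ℕ) := by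
        intro j
        simp only [auxA, auxV, Fin.coe_castLE, dif_pos hi, dif_pos j.isLt, if_pos j.isLt]
      rw [Finset.sum_congr rfl (fun j _ => hterm j)]
      have := Fintype.sum_equiv (Equiv.subRight (⟨(i : ℕ), hi⟩ : Fin k))
        (fun j => (α (j - ⟨(i : ℕ), hi⟩) : ℂ) * ξ ^ (j : ℕ))
        (fun m => (α m : ℂ) * ξ ^ ((m + ⟨(i : ℕ), hi⟩ : Fin k) : ℕ))
        (fun j => by simp [Equiv.subRight, sub_add_cancel])
      rw [this]
      have : ∀ m : Fin k, (α m : ℂ) * ξ ^ ((m + ⟨(i : ℕ), hi⟩ : Fin k) : ℕ)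
          = ((α m : ℂ) * ξ ^ (m : ℕ)) * ξ ^ (i : ℕ) := by
        intro m
        rw [hadd]
        ring
      rw [Finset.sum_congr rfl (fun m _ => this m), ← Finset.sum_mul]
      simp only [auxV, if_pos hi]
    · have : ∀ j : Fin n, (Complex.ofReal (auxA α i j)) * auxV n k ξ j = 0 := by
        intro j
        by_cases hj : (j : ℕ) < k
        · have hne : i ≠ j := by intro h; rw [h] at hi; exact hi hj
          simp [auxA, dif_neg hi, if_neg hne]
        · simp [auxV, hj]
      rw [Finset.sum_eq_zero (fun j _ => this j)]
      simp [auxV, hi]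
end

section
/- For n > 2, the closed disc of radius cos(π/n) centered at the origin is contained in DS_n. -/
open Real Complex Finset

lemma aux_sin (x y : ℝ) : Real.sin (2*x - y) + Real.sin y = 2 * Real.sin x * Real.cos (x - y) := by
  rw [show 2*x - y = x + (x-y) by ring, Real.sin_add, Real.cos_sub, Real.sin_sub]
  linear_combination (-Real.sin y) * Real.sin_sq_add_cos_sq x

lemma geom_lemma {n : ℕ} (hn : 2 < n) (z : ℂ) (hz : ‖z‖ ≤ Real.cos (Real.pi / n)) :
    ∃ a b : ℝ, ∃ k : ℤ, 0 ≤ a ∧ 0 ≤ b ∧ a + b ≤ 1 ∧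
      z = ((a : ℂ) + (b : ℂ) * Complex.exp ((2 * Real.pi / n : ℝ) * Complex.I)) *
        Complex.exp ((2 * Real.pi / n : ℝ) * Complex.I) ^ k := by
  have hn0 : (0:ℝ) < n := by positivity
  have h2n : (2:ℝ) < n := by exact_mod_cast hn
  set α : ℝ := 2 * Real.pi / n with hα_def
  have hα : 0 < α := by positivity
  have hαπ : α < Real.pi := by
    rw [hα_def, div_lt_iff₀ hn0]
    nlinarith [Real.pi_pos, mul_pos Real.pi_pos (sub_pos.mpr h2n)]
  have hhalf : α / 2 = Real.pi / n := by rw [hα_def]; ring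
  obtain ⟨θ, hθ_def⟩ : ∃ θ : ℝ, θ = z.arg := ⟨_, rfl⟩
  obtain ⟨k, hk_def⟩ : ∃ k : ℤ, k = ⌊θ / α⌋ := ⟨_, rfl⟩
  obtain ⟨φ, hφ_def⟩ : ∃ φ : ℝ, φ = θ - k * α := ⟨_, rfl⟩
  have hφ0 : 0 ≤ φ := by
    have h := mul_le_mul_of_nonneg_right (Int.floor_le (θ / α)) hα.le
    rw [div_mul_cancel₀ _ hα.ne'] at h
    rw [hφ_def, hk_def]; linarith
  have hφα : φ < α := by
    have h := mul_lt_mul_of_pos_right (Int.lt_floor_add_one (θ / α)) hα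
    rw [div_mul_cancel₀ _ hα.ne'] at h
    rw [hφ_def, hk_def]; push_cast at h ⊢; nlinarith
  obtain ⟨r, hr_def⟩ : ∃ r : ℝ, r = ‖z‖ := ⟨_, rfl⟩
  have hr0 : 0 ≤ r := hr_def ▸ norm_nonneg z
  have hrz : r ≤ Real.cos (Real.pi / n) := hr_def ▸ hz
  obtain ⟨a, ha_def⟩ : ∃ a : ℝ, a = r * Real.sin (α - φ) / Real.sin α := ⟨_, rfl⟩
  obtain ⟨b, hb_def⟩ : ∃ b : ℝ, b = r * Real.sin φ / Real.sin α := ⟨_, rfl⟩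
  have hsinα : 0 < Real.sin α := Real.sin_pos_of_pos_of_lt_pi hα hαπ
  have hsin2 : 0 < Real.sin (α/2) := Real.sin_pos_of_pos_of_lt_pi (by linarith) (by linarith)
  have hcos2 : 0 < Real.cos (α/2) := by
    apply Real.cos_pos_of_mem_Ioo
    constructor
    · linarith [Real.pi_pos]
    · linarith
  refine ⟨a, b, k, ?_, ?_, ?_, ?_⟩
  · rw [ha_def]
    apply div_nonneg _ hsinα.le
    exact mul_nonneg hr0 (Real.sin_nonneg_of_nonneg_of_le_pi (by linarith) (by linarith))
  · rw [hb_def]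
    apply div_nonneg _ hsinα.le
    exact mul_nonneg hr0 (Real.sin_nonneg_of_nonneg_of_le_pi hφ0 (by linarith))
  · -- a + b ≤ 1
    have hsum : Real.sin (α - φ) + Real.sin φ = 2 * Real.sin (α/2) * Real.cos (α/2 - φ) := by
      have := aux_sin (α/2) φ
      rw [show 2*(α/2) - φ = α - φ by ring] at this
      exact this
    have hsinα2 : Real.sin α = 2 * Real.sin (α/2) * Real.cos (α/2) := by
      have := Real.sin_two_mul (α/2)
      rw [show 2*(α/2) = α by ring] at this
      linarith
    have h1 : Real.cos (α/2 - φ) ≤ 1 := Real.cos_le_one _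
    have h2 : r ≤ Real.cos (α/2) := by rw [hhalf]; exact hrz
    have e1 : r * (2 * Real.sin (α/2) * Real.cos (α/2 - φ)) ≤ r * (2 * Real.sin (α/2)) := by
      apply mul_le_mul_of_nonneg_left _ hr0
      nlinarith
    have e2 : r * (2 * Real.sin (α/2)) ≤ Real.cos (α/2) * (2 * Real.sin (α/2)) := by
      apply mul_le_mul_of_nonneg_right h2 (by positivity)
    have hle : r * (Real.sin (α - φ) + Real.sin φ) ≤ Real.sin α := by
      rw [hsum, hsinα2]; nlinarith
    rw [ha_def, hb_def, ← add_div, div_le_one hsinα]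
    calc r * Real.sin (α - φ) + r * Real.sin φ = r * (Real.sin (α - φ) + Real.sin φ) := by ring
    _ ≤ Real.sin α := hle
  · -- z = (a + b ω) ω^k
    have hre : ((r:ℂ) * Complex.exp ((φ:ℝ) * Complex.I)) = (a:ℂ) + (b:ℂ) * Complex.exp ((α:ℝ) * Complex.I) := by
      apply Complex.ext
      · simp only [Complex.mul_re, Complex.ofReal_re, Complex.ofReal_im, Complex.add_re,
          Complex.exp_ofReal_mul_I_re, Complex.exp_ofReal_mul_I_im, Complex.mul_im]
        rw [ha_def, hb_def]
        field_simp
        rw [Real.sin_sub]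
        ring
      · simp only [Complex.mul_im, Complex.ofReal_re, Complex.ofReal_im, Complex.add_im,
          Complex.exp_ofReal_mul_I_re, Complex.exp_ofReal_mul_I_im]
        rw [hb_def]
        field_simp
        try ring
    have habs : z = (r:ℂ) * Complex.exp ((θ:ℝ) * Complex.I) := by
      rw [hr_def, hθ_def]; exact (Complex.norm_mul_exp_arg_mul_I z).symm
    rw [habs, show θ = φ + k * α by rw [hφ_def]; ring]
    have hsplit : ((φ + k*α : ℝ) : ℂ) * Complex.I = (φ:ℝ) * Complex.I + (k:ℂ) * ((α:ℝ) * Complex.I) := by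
      push_cast; ring
    rw [hsplit, Complex.exp_add, Complex.exp_int_mul]
    rw [← hre]
    ring

/-- For `n > 2`, the closed disc of radius `cos (π/n)` centered at the origin
is contained in `DS_n`. -/
theorem stmt_10 {n : ℕ} (hn : 2 < n) (z : ℂ)
    (hz : ‖z‖ ≤ Real.cos (Real.pi / n)) :
    ∃ A : Matrix (Fin n) (Fin n) ℝ, DoublyStochastic' A ∧
      ∃ v : Fin n → ℂ, v ≠ 0 ∧ (A.map Complex.ofReal).mulVec v = z • v := by
  haveI : NeZero n := ⟨by omega⟩
  have hnR : (0:ℝ) < n := by positivity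
  have hnC : (n:ℂ) ≠ 0 := by exact_mod_cast hnR.ne'
  obtain ⟨a, b, k, ha, hb, hab, hzab⟩ := geom_lemma hn z hz
  set ω : ℂ := Complex.exp ((2 * Real.pi / n : ℝ) * Complex.I) with hω_def
  have hω0 : ω ≠ 0 := Complex.exp_ne_zero _
  have hωn : ω ^ n = 1 := by
    rw [hω_def, ← Complex.exp_nat_mul]
    rw [show ((n:ℂ) * ((2 * Real.pi / n : ℝ) * Complex.I)) = 2 * (Real.pi : ℂ) * Complex.I by
      push_cast; field_simp]
    exact Complex.exp_two_pi_mul_I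
  have hprim : IsPrimitiveRoot ω n := by
    have h := Complex.isPrimitiveRoot_exp n (by omega)
    convert h using 2
    push_cast
    ring
  have hsum0 : ∑ m : Fin n, ω ^ (m : ℕ) = 0 := by
    rw [Fin.sum_univ_eq_sum_range (fun i => ω ^ i)]
    exact hprim.geom_sum_eq_zero (by omega)
  have hpow_mod : ∀ m : ℕ, ω ^ (m % n) = ω ^ m := by
    intro m
    conv_rhs => rw [← Nat.div_add_mod m n]
    rw [pow_add, pow_mul, hωn, one_pow, one_mul]
  have hzpow_mod : ∀ j : ℤ, ω ^ (j % (n:ℤ)) = ω ^ j := by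
    intro j
    conv_rhs => rw [← Int.mul_ediv_add_emod j n]
    rw [zpow_add₀ hω0, zpow_mul, zpow_natCast, hωn, one_zpow, one_mul]
  have hkmod0 : 0 ≤ k % (n:ℤ) := Int.emod_nonneg k (by exact_mod_cast (by omega : n ≠ 0))
  have hkmodn : k % (n:ℤ) < n := Int.emod_lt_of_pos k (by exact_mod_cast (by omega : 0 < n))
  have hklt : (k % (n:ℤ)).toNat < n := by omega
  set kf : Fin n := ⟨(k % (n:ℤ)).toNat, hklt⟩ with hkf_def
  have hv1 : ((1 : Fin n) : ℕ) = 1 := by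
    rw [Fin.val_one']
    exact Nat.mod_eq_of_lt (by omega)
  have hkf : ω ^ (kf : ℕ) = ω ^ k := by
    rw [← zpow_natCast, show (((kf : ℕ)) : ℤ) = k % (n:ℤ) by
      rw [hkf_def]; exact Int.toNat_of_nonneg hkmod0]
    exact hzpow_mod k
  have hkf1 : ω ^ ((kf + 1 : Fin n) : ℕ) = ω ^ (k + 1) := by
    have hv : ((kf + 1 : Fin n) : ℕ) = ((kf : ℕ) + 1) % n := by rw [Fin.val_add, hv1]
    rw [hv, hpow_mod, pow_succ, hkf, zpow_add₀ hω0, zpow_one]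
  set t : Fin n → ℝ := fun m =>
    (if m = kf then a else 0) + (if m = kf + 1 then b else 0) + (1 - a - b)/n with ht_def
  have ht_nonneg : ∀ m, 0 ≤ t m := by
    intro m
    have h0 : (0:ℝ) ≤ (1 - a - b)/n := div_nonneg (by linarith) hnR.le
    rw [ht_def]
    dsimp only
    split_ifs <;> linarith
  have htsum : ∑ m, t m = 1 := by
    rw [ht_def]
    rw [Finset.sum_add_distrib, Finset.sum_add_distrib,
      Finset.sum_ite_eq' univ kf (fun _ => a), Finset.sum_ite_eq' univ (kf+1) (fun _ => b),
      Finset.sum_const, card_univ, Fintype.card_fin, nsmul_eq_mul]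
    simp only [Finset.mem_univ, if_true]
    field_simp
    ring
  have hkey : ∑ m : Fin n, (t m : ℂ) * ω ^ (m : ℕ) = z := by
    have expand : ∀ m : Fin n, (t m : ℂ) * ω ^ (m : ℕ) =
        (if m = kf then (a:ℂ) * ω ^ (m:ℕ) else 0) + (if m = kf + 1 then (b:ℂ) * ω ^ (m:ℕ) else 0)
          + ((1 - a - b : ℝ):ℂ)/(n:ℂ) * ω ^ (m:ℕ) := by
      intro m
      rw [ht_def]
      dsimp only
      split_ifs <;> push_cast <;> ring
    rw [Finset.sum_congr rfl (fun m _ => expand m), Finset.sum_add_distrib, Finset.sum_add_distrib,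
      Finset.sum_ite_eq' univ kf (fun m => (a:ℂ) * ω ^ (m:ℕ)),
      Finset.sum_ite_eq' univ (kf+1) (fun m => (b:ℂ) * ω ^ (m:ℕ)),
      ← Finset.mul_sum, hsum0, mul_zero, add_zero]
    simp only [Finset.mem_univ, if_true]
    rw [hkf, hkf1, hzab, zpow_add₀ hω0, zpow_one]
    ring
  refine ⟨Matrix.of (fun i j => t (j - i)), ⟨?_, ?_, ?_⟩, fun m => ω ^ (m : ℕ), ?_, ?_⟩
  · intro i j; exact ht_nonneg _
  · intro i
    calc ∑ j, t (j - i) = ∑ j, t j :=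
          Fintype.sum_equiv (Equiv.subRight i) _ t (fun j => rfl)
    _ = 1 := htsum
  · intro j
    calc ∑ i, t (j - i) = ∑ i, t i :=
          Fintype.sum_equiv (Equiv.subLeft j) _ t (fun i => rfl)
    _ = 1 := htsum
  · intro h
    have h0 := congrFun h 0
    simp at h0
  · funext i
    have hterm : ∀ j : Fin n, ((t (j - i) : ℝ):ℂ) * ω ^ (j:ℕ) =
        (fun m => ((t m : ℝ):ℂ) * (ω ^ (m:ℕ) * ω ^ (i:ℕ))) ((Equiv.subRight i) j) := by
      intro j
      simp only [Equiv.subRight_apply]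
      congr 1
      calc ω ^ (j:ℕ) = ω ^ (((j - i) + i : Fin n):ℕ) := by rw [sub_add_cancel]
      _ = ω ^ (((j-i : Fin n):ℕ) + (i:ℕ)) := by rw [Fin.val_add, hpow_mod]
      _ = ω ^ ((j-i : Fin n):ℕ) * ω ^ (i:ℕ) := pow_add ω _ _
    calc (Matrix.of (fun i j => t (j - i)) |>.map Complex.ofReal).mulVec (fun m => ω ^ (m:ℕ)) i
        = ∑ j, ((t (j - i) : ℝ):ℂ) * ω ^ (j:ℕ) := by
          simp [Matrix.mulVec, Matrix.map_apply, dotProduct]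
    _ = ∑ m, ((t m : ℝ):ℂ) * (ω ^ (m:ℕ) * ω ^ (i:ℕ)) :=
          Fintype.sum_equiv (Equiv.subRight i) _ _ hterm
    _ = (∑ m, ((t m : ℝ):ℂ) * ω ^ (m:ℕ)) * ω ^ (i:ℕ) := by
          rw [Finset.sum_mul]; exact Finset.sum_congr rfl (fun m _ => by ring)
    _ = z * ω ^ (i:ℕ) := by rw [hkey]
    _ = (z • fun m => ω ^ (m:ℕ)) i := by simp
end

section
/- Two n-by-n permutation matrices are similar (over ℂ) if and only if they are permutation similar, i.e., similar via a permutation matrix. -/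
set_option linter.unusedSectionVars false

open Equiv Equiv.Perm Finset

namespace Stmt12Aux

variable {α : Type*} [Fintype α] [DecidableEq α]

/-- The length of the cycle through `x` (1 for fixed points). -/
def cfun (f : Perm α) (x : α) : ℕ :=
  if f x = x then 1 else (f.cycleOf x).support.card

lemma key1 (f : Perm α) (x : α) (k : ℕ) :
    (f ^ k) x = x ↔ cfun f x ∣ k := by
  unfold cfun
  by_cases h : f x = x
  · simp [h, pow_apply_eq_self_of_apply_eq_self h]
  · rw [if_neg h]
    have hx : x ∈ (f.cycleOf x).support :=
      mem_support_cycleOf_iff.2 ⟨Equiv.Perm.SameCycle.refl _ _, mem_support.2 h⟩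
    exact (f.isCycleOn_support_cycleOf x).pow_apply_eq hx

lemma cfun_pos (f : Perm α) (x : α) : 0 < cfun f x := by
  unfold cfun
  by_cases h : f x = x
  · simp [h]
  · rw [if_neg h]
    exact card_pos.2 (support_cycleOf_nonempty.2 h)

/-- Number of points on cycles of length `d`. -/
def N (f : Perm α) (d : ℕ) : ℕ := (univ.filter fun x => cfun f x = d).card

/-- Number of fixed points of `f ^ k`. -/
def F (f : Perm α) (k : ℕ) : ℕ := (univ.filter fun x => (f ^ k) x = x).card

lemma key2 (f : Perm α) {k : ℕ} (hk : k ≠ 0) :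
    F f k = ∑ d ∈ k.divisors, N f d := by
  have : F f k = (univ.filter fun x => cfun f x ∣ k).card := by
    unfold F
    congr 1
    exact Finset.filter_congr fun x _ => by simpa using key1 f x k
  rw [this]
  rw [Finset.card_eq_sum_card_fiberwise (f := cfun f) (t := k.divisors)
    (fun x hx => Nat.mem_divisors.2 ⟨(mem_filter.1 hx).2, hk⟩)]
  refine Finset.sum_congr rfl fun d hd => ?_
  unfold N
  congr 1
  rw [Finset.filter_filter]
  exact Finset.filter_congr fun x _ => by
    constructor
    · exact fun h => h.2
    · exact fun h => ⟨h ▸ (Nat.mem_divisors.1 hd).1, h⟩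

lemma key3 {f g : Perm α} (h : ∀ k, k ≠ 0 → F f k = F g k) : ∀ d, N f d = N g d := by
  intro d
  induction d using Nat.strong_induction_on with
  | _ d ih =>
    rcases Nat.eq_zero_or_pos d with rfl | hd
    · have h0 : ∀ (f' : Perm α), N f' 0 = 0 := fun f' => by
        unfold N
        rw [Finset.card_eq_zero, Finset.filter_eq_empty_iff]
        exact fun x _ => (cfun_pos f' x).ne'
      rw [h0, h0]
    · have hdd : d ∈ d.divisors := Nat.mem_divisors_self d hd.ne'
      have e1 : F f d = N f d + ∑ e ∈ d.divisors.erase d, N f e := by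
        rw [key2 f hd.ne', ← Finset.add_sum_erase _ _ hdd]
      have e2 : F g d = N g d + ∑ e ∈ d.divisors.erase d, N g e := by
        rw [key2 g hd.ne', ← Finset.add_sum_erase _ _ hdd]
      have hsum : ∑ e ∈ d.divisors.erase d, N f e = ∑ e ∈ d.divisors.erase d, N g e := by
        refine Finset.sum_congr rfl fun e he => ?_
        have he' := Finset.mem_erase.1 he
        exact ih e (lt_of_le_of_ne (Nat.le_of_dvd hd (Nat.mem_divisors.1 he'.2).1) he'.1)
      have := (h d hd.ne')
      rw [e1, e2, hsum] at this
      exact Nat.add_right_cancel this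

lemma key4 (f : Perm α) {ℓ : ℕ} (hℓ : 2 ≤ ℓ) :
    N f ℓ = ℓ * (f.cycleType.count ℓ) := by
  classical
  set s := univ.filter fun x => cfun f x = ℓ with hs
  set t := f.cycleFactorsFinset.filter fun c => c.support.card = ℓ with ht
  have hmove : ∀ x, cfun f x = ℓ → f x ≠ x := by
    intro x hx hfix
    unfold cfun at hx
    rw [if_pos hfix] at hx
    omega
  have hmap : ∀ x ∈ s, f.cycleOf x ∈ t := by
    intro x hx
    have hx' := (mem_filter.1 hx).2
    have hm := hmove x hx'
    refine mem_filter.2 ⟨cycleOf_mem_cycleFactorsFinset_iff.2 (mem_support.2 hm), ?_⟩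
    unfold cfun at hx'
    rwa [if_neg hm] at hx'
  have hcard : s.card = ∑ c ∈ t, (s.filter fun x => f.cycleOf x = c).card :=
    Finset.card_eq_sum_card_fiberwise hmap
  have hfiber : ∀ c ∈ t, (s.filter fun x => f.cycleOf x = c) = c.support := by
    intro c hc
    obtain ⟨hcf, hcl⟩ := mem_filter.1 hc
    ext x
    simp only [hs, mem_filter, mem_univ, true_and]
    constructor
    · rintro ⟨hx, rfl⟩
      exact mem_support_cycleOf_iff.2 ⟨Equiv.Perm.SameCycle.refl _ _,
        mem_support.2 (hmove x hx)⟩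
    · intro hx
      have hco : f.cycleOf x = c := (cycle_is_cycleOf hx hcf).symm
      have hxm : x ∈ f.support := (mem_support_cycleOf_iff.1 (hco ▸ hx)).2
      refine ⟨?_, hco⟩
      unfold cfun
      rw [if_neg (mem_support.1 hxm), hco, hcl]
  have hN : N f ℓ = ∑ c ∈ t, ℓ := by
    unfold N
    rw [← hs, hcard]
    refine Finset.sum_congr rfl fun c hc => ?_
    rw [hfiber c hc, (mem_filter.1 hc).2]
  have hcount : f.cycleType.count ℓ = t.card := by
    have htc : t.card =
        Multiset.card (Multiset.filter (fun c => c.support.card = ℓ) f.cycleFactorsFinset.val) :=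
      rfl
    rw [cycleType_def, Multiset.count_map, htc]
    congr 1
    apply Multiset.filter_congr
    intro c _
    simp [eq_comm, Function.comp]
  rw [hN, Finset.sum_const, hcount, smul_eq_mul, mul_comm]

lemma cycleType_eq_of_F {f g : Perm α} (h : ∀ k, k ≠ 0 → F f k = F g k) :
    f.cycleType = g.cycleType := by
  ext ℓ
  by_cases hℓ : 2 ≤ ℓ
  · have h4f := key4 f hℓ
    have h4g := key4 g hℓ
    have := key3 h ℓ
    rw [h4f, h4g] at this
    exact Nat.eq_of_mul_eq_mul_left (by omega) this
  · rw [Multiset.count_eq_zero_of_notMem (fun hm => hℓ (two_le_of_mem_cycleType hm)),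
      Multiset.count_eq_zero_of_notMem (fun hm => hℓ (two_le_of_mem_cycleType hm))]

/-- permMatrix is anti-multiplicative. -/
lemma permMatrix_mul (f g : Perm α) :
    (f * g).permMatrix ℂ = g.permMatrix ℂ * f.permMatrix ℂ := by
  show ((g.trans f).toPEquiv).toMatrix = _
  rw [Equiv.toPEquiv_trans, PEquiv.toMatrix_trans]

lemma permMatrix_one : ((1 : Perm α).permMatrix ℂ) = 1 := by
  show ((Equiv.refl α).toPEquiv).toMatrix = 1
  rw [Equiv.toPEquiv_refl, PEquiv.toMatrix_refl]

lemma permMatrix_pow (f : Perm α) (k : ℕ) :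
    (f ^ k).permMatrix ℂ = (f.permMatrix ℂ) ^ k := by
  induction k with
  | zero => simpa using permMatrix_one
  | succ k ih => rw [pow_succ, permMatrix_mul, ih, ← pow_succ']

lemma isUnit_permMatrix (f : Perm α) : IsUnit (f.permMatrix ℂ) := by
  rw [Matrix.isUnit_iff_isUnit_det, Matrix.det_permutation]
  have : IsUnit ((Int.castRingHom ℂ) ((f.sign : ℤˣ) : ℤ)) := (f.sign).isUnit.map (Int.castRingHom ℂ)
  simpa using this

lemma trace_permMatrix_pow (f : Perm α) (k : ℕ) :
    Matrix.trace ((f.permMatrix ℂ) ^ k) = (F f k : ℂ) := by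
  rw [← permMatrix_pow, Matrix.trace_permutation]
  congr 1
  unfold F
  rw [Set.ncard_eq_toFinset_card']
  congr 1
  ext x
  simp [Function.fixedPoints, Function.IsFixedPt]
  exact Set.mem_toFinset

end Stmt12Aux


open Stmt12Aux in
/-- Two permutation matrices are similar over `ℂ` iff they are similar via a
permutation matrix. -/
theorem stmt_12 {n : ℕ} (σ τ : Equiv.Perm (Fin n)) :
    (∃ S : Matrix (Fin n) (Fin n) ℂ, IsUnit S ∧
        S⁻¹ * σ.permMatrix ℂ * S = τ.permMatrix ℂ) ↔
      ∃ p : Equiv.Perm (Fin n),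
        (p.permMatrix ℂ)⁻¹ * σ.permMatrix ℂ * p.permMatrix ℂ = τ.permMatrix ℂ := by
  constructor
  · rintro ⟨S, hS, hsim⟩
    have hdet := (Matrix.isUnit_iff_isUnit_det S).1 hS
    have hconjpow : ∀ k : ℕ,
        (τ.permMatrix ℂ) ^ k = S⁻¹ * (σ.permMatrix ℂ) ^ k * S := by
      intro k
      induction k with
      | zero => simp [Matrix.nonsing_inv_mul S hdet]
      | succ k ih =>
        rw [pow_succ, ih, ← hsim, pow_succ]
        simp only [Matrix.mul_assoc]
        rw [Matrix.mul_nonsing_inv_cancel_left _ _ hdet]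
    have hF : ∀ k, k ≠ 0 → F σ k = F τ k := by
      intro k hk
      have h1 : Matrix.trace ((τ.permMatrix ℂ) ^ k)
          = Matrix.trace ((σ.permMatrix ℂ) ^ k) := by
        rw [hconjpow k, Matrix.trace_mul_cycle,
          Matrix.mul_nonsing_inv _ hdet, Matrix.one_mul]
      rw [trace_permMatrix_pow, trace_permMatrix_pow] at h1
      exact_mod_cast h1.symm
    have hct := cycleType_eq_of_F hF
    obtain ⟨c, hc⟩ := isConj_iff.1 ((Equiv.Perm.isConj_iff_cycleType_eq).2 hct)
    refine ⟨c, ?_⟩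
    have h1 : σ.permMatrix ℂ * c.permMatrix ℂ = c.permMatrix ℂ * τ.permMatrix ℂ := by
      rw [← permMatrix_mul, ← permMatrix_mul]
      congr 1
      rw [← hc]
      group
    have hinv : (c.permMatrix ℂ)⁻¹ = (c⁻¹).permMatrix ℂ := by
      apply Matrix.inv_eq_right_inv
      rw [← permMatrix_mul]
      simp [permMatrix_one]
    rw [hinv, Matrix.mul_assoc, h1, ← Matrix.mul_assoc, ← permMatrix_mul]
    simp [permMatrix_one]
  · rintro ⟨p, hp⟩
    exact ⟨p.permMatrix ℂ, isUnit_permMatrix p, hp⟩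
end
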